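/- arXiv:2512.07418 — 2 statements merged into one kernel-verified Lean document; each statement's English description precedes it below -/
import Mathlib

section
/- Let M be a Riemannian manifold with boundary ∂M, N the inner unit normal, S the shape operator S(X) = −∇_X N, and ω a smooth p-form on M. Then along ∂M, for any vector field X tangent to ∂M: ∇^{∂M}_X (J*ω) = J*(∇_X ω) + (S(X))^* ∧ i_N ω, where (S(X))^* is the 1-form dual to S(X). -/
open Finset Function

/-- Differential `p`-forms on a manifold `M`, modeled synthetically as `C`-valued functions on
`p`-tuples of vector fields, where the commutative ring `C` plays the role of `C^∞(M)` and
`Vec` the `C`-module of vector fields. -/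
abbrev Form (Vec C : Type*) (p : ℕ) := (Fin p → Vec) → C

/-- Interior product `i_X ω`. -/
def iProd {Vec C : Type*} [CommRing C] : ∀ {p : ℕ}, Vec → Form Vec C p → Form Vec C (p - 1)
  | 0, _, _ => 0
  | _ + 1, X, ω => fun Y => ω (Fin.cons X Y)

/-- Covariant derivative `∇_X ω` of a `p`-form, where `act X u` is the derivative `X(u)` of the
function `u` along `X` and `conn X Y = ∇_X Y` is the Levi-Civita connection. -/
def covD {Vec C : Type*} [CommRing C] (act : Vec → C → C) (conn : Vec → Vec → Vec) {p : ℕ}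
    (X : Vec) (ω : Form Vec C p) : Form Vec C p :=
  fun Y => act X (ω Y) - ∑ i, ω (Function.update Y i (conn X (Y i)))

/-- The derivation extension `T^{[p]}` of a `(1,1)`-tensor `T` to `p`-forms:
`(T^{[p]}ω)(X_1,…,X_p) = Σ_α ω(X_1,…,T(X_α),…,X_p)`. -/
def derext {Vec C : Type*} [CommRing C] (T : Vec → Vec) {p : ℕ} (ω : Form Vec C p) :
    Form Vec C p :=
  fun Y => ∑ i, ω (Function.update Y i (T (Y i)))

/-- Exterior derivative, via the torsion-free connection:
`dω(X_0,…,X_p) = Σ_i (-1)^i (∇_{X_i}ω)(X_0,…,X̂_i,…,X_p)`. -/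
def extD {Vec C : Type*} [CommRing C] (act : Vec → C → C) (conn : Vec → Vec → Vec) {p : ℕ}
    (ω : Form Vec C p) : Form Vec C (p + 1) :=
  fun Y => ∑ i : Fin (p + 1),
    (-1 : C) ^ (i : ℕ) * covD act conn (Y i) ω (fun j => Y (i.succAbove j))

/-- Wedge product `θ ∧ ω` of a `1`-form `θ` with a `p`-form `ω`. -/
def oneWedge {Vec C : Type*} [CommRing C] (θ : Vec → C) {p : ℕ} (ω : Form Vec C p) :
    Form Vec C (p + 1) :=
  fun Y => ∑ i : Fin (p + 1),
    (-1 : C) ^ (i : ℕ) * θ (Y i) * ω (fun j => Y (i.succAbove j))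

/-- Interior product `i_X ω` for forms of positive degree. -/
def iProdS {Vec C : Type*} [CommRing C] {p : ℕ} (X : Vec) (ω : Form Vec C (p + 1)) :
    Form Vec C p :=
  fun Y => ω (Fin.cons X Y)

/-- Restriction `J*ω` of a `p`-form on `M` to the boundary, where `ins` is the inclusion of
the module `VecB` of vector fields tangent to `∂M` into the ambient vector fields. -/
def Jstar {C : Type*} [CommRing C] {Vec VecB : Type*} [AddCommGroup Vec] [Module C Vec]
    [AddCommGroup VecB] [Module C VecB] (ins : VecB →ₗ[C] Vec) {p : ℕ}
    (ω : Form Vec C p) : Form VecB C p :=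
  fun Y => ω fun j => ins (Y j)

/-- The boundary `(p)`-form `i_N ω` obtained from an ambient `(p+1)`-form `ω` by inserting
the inner unit normal `N` and restricting to the boundary. -/
def iNres {C : Type*} [CommRing C] {Vec VecB : Type*} [AddCommGroup Vec] [Module C Vec]
    [AddCommGroup VecB] [Module C VecB] (ins : VecB →ₗ[C] Vec) (N : Vec) {p : ℕ}
    (ω : Form Vec C (p + 1)) : Form VecB C p :=
  fun Y => ω (Fin.cons N fun j => ins (Y j))

/-!
Restricting to `∂M` only changes the connection terms of `∇_X ω`. By the Gauss formula,
`∇_X Y_i` differs from `∇^{∂M}_X Y_i` by `⟨S X, Y_i⟩ N`, so each term of `J*(∇_X ω)` picks up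
`⟨S X, Y_i⟩ ω(Y_1, …, N, …, Y_p)` with `N` in slot `i`. Moving `N` to the front costs the sign
`(-1)^i`, and the resulting alternating sum is exactly `(S X)^* ∧ i_N ω`.
-/

namespace MultilinearMap

variable {R ι M N : Type*} [CommRing R] [decEq : DecidableEq ι] [AddCommGroup M] [Module R M]
  [AddCommGroup N] [Module R N]

def ofMapUpdateAddSMul (f : (ι → M) → N)
    (hf : ∀ (v : ι → M) (i : ι) (a b : M) (c : R),
      f (update v i (a + c • b)) = f (update v i a) + c • f (update v i b)) :
    MultilinearMap R (fun _ : ι => M) N where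
  toFun := f
  map_update_add' := by
    intro inst v i a b
    obtain rfl := Subsingleton.elim inst decEq
    simpa only [one_smul] using hf v i a b 1
  map_update_smul' := by
    intro inst v i c b
    obtain rfl := Subsingleton.elim inst decEq
    have hzero : f (update v i 0) = 0 := by
      simpa only [one_smul, add_zero, left_eq_add] using hf v i 0 0 1
    simpa only [zero_add, hzero] using hf v i 0 b c

end MultilinearMap

theorem form_update_eq_neg_one_pow_mul_cons {C Vec : Type*} [CommRing C] [AddCommGroup Vec]
    [Module C Vec] {p : ℕ} (ω : Form Vec C (p + 1))
    (hMulti : ∀ (Y : Fin (p + 1) → Vec) (i : Fin (p + 1)) (a b : Vec) (c : C),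
      ω (update Y i (a + c • b)) = ω (update Y i a) + c * ω (update Y i b))
    (hAlt : ∀ (Y : Fin (p + 1) → Vec) (i j : Fin (p + 1)), i ≠ j → Y i = Y j → ω Y = 0)
    (Y : Fin (p + 1) → Vec) (i : Fin (p + 1)) (x : Vec) :
    ω (update Y i x) = (-1) ^ (i : ℕ) * ω (Fin.cons x (i.removeNth Y)) := by
  let f : Vec [⋀^Fin (p + 1)]→ₗ[C] C :=
    ⟨MultilinearMap.ofMapUpdateAddSMul ω hMulti, fun v i j hv hij => hAlt v i j hij hv⟩
  have h := f.map_insertNth i x (i.removeNth Y)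
  rw [Fin.insertNth_removeNth] at h
  simp only [zsmul_eq_mul, Int.cast_pow, Int.cast_neg, Int.cast_one] at h
  exact h

/-- Along `∂M`, for `X` tangent to `∂M`:
`∇^{∂M}_X (J*ω) = J*(∇_X ω) + (S X)^* ∧ i_N ω`, where `S` is the shape operator,
`(S X)^* = g(S X, ·)` its dual `1`-form, and the Gauss formula
`∇_X Y = ∇^{∂M}_X Y + ⟨S X, Y⟩ N` holds.  `ω` is a smooth (multilinear, alternating)
`(p+1)`-form on `M`. -/
theorem stmt10 {C : Type*} [CommRing C] {Vec VecB : Type*} [AddCommGroup Vec] [Module C Vec]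
    [AddCommGroup VecB] [Module C VecB]
    (act : Vec → C → C) (conn : Vec → Vec → Vec) (connB : VecB → VecB → VecB)
    (ins : VecB →ₗ[C] Vec) (N : Vec) (S : VecB → VecB) (g : VecB → VecB → C)
    (hGauss : ∀ X Y : VecB, conn (ins X) (ins Y) = ins (connB X Y) + g (S X) Y • N)
    {p : ℕ} (ω : Form Vec C (p + 1))
    (hMulti : ∀ (Y : Fin (p + 1) → Vec) (i : Fin (p + 1)) (a b : Vec) (c : C),
      ω (Function.update Y i (a + c • b))
        = ω (Function.update Y i a) + c * ω (Function.update Y i b))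
    (hAlt : ∀ (Y : Fin (p + 1) → Vec) (i j : Fin (p + 1)), i ≠ j → Y i = Y j → ω Y = 0)
    (X : VecB) :
    covD (fun Z c => act (ins Z) c) connB X (Jstar ins ω)
      = Jstar ins (covD act conn (ins X) ω)
        + oneWedge (fun Y => g (S X) Y) (iNres ins N ω) := by
  funext Y
  have hGaussTerm : ∀ i : Fin (p + 1),
      ω (update (ins ∘ Y) i (conn (ins X) (ins (Y i))))
        = ω (ins ∘ update Y i (connB X (Y i)))
          + (-1) ^ (i : ℕ) * g (S X) (Y i) * ω (Fin.cons N (i.removeNth (ins ∘ Y))) := by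
    intro i
    rw [hGauss, hMulti, form_update_eq_neg_one_pow_mul_cons ω hMulti hAlt _ i N, comp_update]
    ring
  show act (ins X) (ω (ins ∘ Y)) - ∑ i, ω (ins ∘ update Y i (connB X (Y i)))
      = act (ins X) (ω (ins ∘ Y)) - ∑ i, ω (update (ins ∘ Y) i (conn (ins X) (ins (Y i))))
        + ∑ i : Fin (p + 1),
            (-1) ^ (i : ℕ) * g (S X) (Y i) * ω (Fin.cons N (i.removeNth (ins ∘ Y)))
  simp only [hGaussTerm, sum_add_distrib]
  ring
end

section
/- Let M be a Riemannian manifold with boundary, N the inner unit normal, S the shape operator, and ω a smooth p-form on M. Then on ∂M: d^{∂M}(i_N ω) = −i_N(dω) + J*(∇_N ω) − S^{[p]}(J*ω). -/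
open Finset Function

/-!
The identity is Cartan's formula `i_N dω = L_N ω - d(i_N ω)`, restricted to the boundary, with the
Lie derivative written through the torsion-free connection as `L_N = ∇_N + (∇N)^{[·]}`.
By the Gauss formula, `∇` and `∇^{∂M}` differ on tangent fields by a multiple of `N`, which
`i_N ω` kills by alternation, so `J* d(i_N ω) = d^{∂M}(J* i_N ω)`; and since `∇_X N = -S X` on
the boundary, `J*((∇N)^{[·]} ω) = -S^{[·]}(J* ω)`.
-/

def Form.toAlternatingMap {C Vec : Type*} [CommRing C] [AddCommGroup Vec] [Module C Vec]
    {n : ℕ} (ω : Form Vec C n)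
    (hMulti : ∀ (Y : Fin n → Vec) (i : Fin n) (a b : Vec) (c : C),
      ω (update Y i (a + c • b)) = ω (update Y i a) + c * ω (update Y i b))
    (hAlt : ∀ (Y : Fin n → Vec) (i j : Fin n), i ≠ j → Y i = Y j → ω Y = 0) :
    Vec [⋀^Fin n]→ₗ[C] C :=
  have map_zero : ∀ Y i, ω (update Y i 0) = 0 := fun Y i => by
    simpa using hMulti Y i 0 0 1
  { MultilinearMap.mk' ω (fun Y i a b => by simpa using hMulti Y i a b 1)
      (fun Y i c b => by simpa [map_zero] using hMulti Y i 0 b c) with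
    map_eq_zero_of_eq' := fun Y i j hY hij => hAlt Y i j hij hY }

section Connection

variable {C Vec : Type*} [CommRing C] (act : Vec → C → C) (conn : Vec → Vec → Vec)

theorem covD_cons {n : ℕ} (X Z : Vec) (ω : Form Vec C (n + 1)) (Y : Fin n → Vec) :
    covD act conn X ω (Fin.cons Z Y)
      = covD act conn X (iProdS Z ω) Y - iProdS (conn X Z) ω Y := by
  simp only [covD, iProdS, Fin.sum_univ_succ, Fin.cons_zero, Fin.cons_succ, Fin.update_cons_zero,
    ← Fin.cons_update]
  ring

variable [AddCommGroup Vec] [Module C Vec]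

theorem iProdS_extD {n : ℕ} (Ω : Vec [⋀^Fin (n + 1)]→ₗ[C] C) (Z : Vec) :
    iProdS Z (extD act conn Ω)
      = covD act conn Z Ω - extD act conn (iProdS Z Ω) + derext (fun X => conn X Z) Ω := by
  funext Y
  have map_cons_succAbove : ∀ (i : Fin (n + 1)) (x : Vec),
      Ω (Fin.cons x fun j => Y (i.succAbove j)) = (-1) ^ (i : ℕ) * Ω (update Y i x) := fun i x => by
    have h := Ω.neg_one_pow_smul_map_insertNth i x (i.removeNth Y)
    rw [Fin.insertNth_removeNth, zsmul_eq_mul, Int.cast_pow, Int.cast_neg, Int.cast_one] at h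
    exact h.symm
  have cons_succ_succAbove : ∀ k : Fin (n + 1),
      (fun j => (Fin.cons Z Y : Fin (n + 2) → Vec) (k.succ.succAbove j))
        = Fin.cons Z fun j => Y (k.succAbove j) := fun k => by
    funext j
    cases j using Fin.cases <;> simp
  have neg_one_pow_sq : ∀ k : ℕ, ((-1 : C) ^ k) ^ 2 = 1 := fun k => by
    rw [← pow_mul, mul_comm, pow_mul, neg_one_sq, one_pow]
  change extD act conn Ω (Fin.cons Z Y) = covD act conn Z Ω Y - extD act conn (iProdS Z Ω) Y
    + derext (fun X => conn X Z) Ω Y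
  rw [extD, Fin.sum_univ_succ]
  simp only [Fin.cons_zero, Fin.cons_succ, Fin.succAbove_zero, cons_succ_succAbove, covD_cons,
    Fin.val_succ, Fin.val_zero, pow_zero, one_mul, iProdS, map_cons_succAbove, extD, derext,
    sub_eq_add_neg (covD act conn Z Ω Y), add_assoc, ← Finset.sum_neg_distrib,
    ← Finset.sum_add_distrib]
  congr 1
  refine Finset.sum_congr rfl fun k _ => ?_
  linear_combination Ω (update Y k (conn (Y k) Z)) * neg_one_pow_sq k

end Connection

section Boundary

variable {C Vec VecB : Type*} [CommRing C] [AddCommGroup Vec] [Module C Vec]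
  [AddCommGroup VecB] [Module C VecB] (ins : VecB →ₗ[C] Vec)

theorem Jstar_update {n : ℕ} (ω : Form Vec C n) (Y : Fin n → VecB) (i : Fin n) (v : VecB) :
    Jstar ins ω (update Y i v) = ω (update (fun j => ins (Y j)) i (ins v)) :=
  congr_arg ω (funext fun j => apply_update (fun _ => ins) Y i v j)

theorem Jstar_covD (act : Vec → C → C) (conn : Vec → Vec → Vec) (connB : VecB → VecB → VecB)
    (N : Vec) (ν : VecB → VecB → C)
    (hGauss : ∀ X Y, conn (ins X) (ins Y) = ins (connB X Y) + ν X Y • N)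
    {n : ℕ} (Θ : MultilinearMap C (fun _ : Fin n => Vec) C)
    (hΘ : ∀ (Y : Fin n → Vec) (j : Fin n), Θ (update Y j N) = 0) (X : VecB) :
    Jstar ins (covD act conn (ins X) Θ)
      = covD (fun Z c => act (ins Z) c) connB X (Jstar ins Θ) := by
  funext Y
  simp only [covD, Jstar_update]
  simp only [Jstar, covD]
  congr 1
  refine Finset.sum_congr rfl fun i _ => ?_
  rw [hGauss, Θ.map_update_add, Θ.map_update_smul, hΘ, smul_zero, add_zero]

theorem Jstar_extD (act : Vec → C → C) (conn : Vec → Vec → Vec) (connB : VecB → VecB → VecB)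
    (N : Vec) (ν : VecB → VecB → C)
    (hGauss : ∀ X Y, conn (ins X) (ins Y) = ins (connB X Y) + ν X Y • N)
    {n : ℕ} (Θ : MultilinearMap C (fun _ : Fin n => Vec) C)
    (hΘ : ∀ (Y : Fin n → Vec) (j : Fin n), Θ (update Y j N) = 0) :
    Jstar ins (extD act conn Θ) = extD (fun Z c => act (ins Z) c) connB (Jstar ins Θ) := by
  funext Y
  simp only [Jstar, extD, ← Jstar_covD ins act conn connB N ν hGauss Θ hΘ]

theorem Jstar_derext {n : ℕ} (Ω : MultilinearMap C (fun _ : Fin n => Vec) C) (T : Vec → Vec)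
    (S : VecB → VecB) (hT : ∀ X, T (ins X) = -ins (S X)) :
    Jstar ins (derext T Ω) = -derext S (Jstar ins Ω) := by
  funext Y
  simp only [derext, Jstar_update, Pi.neg_apply, ← Finset.sum_neg_distrib]
  simp only [Jstar, derext, hT, Ω.map_update_neg]

end Boundary

/-- On `∂M`:
`d^{∂M}(i_N ω) = −i_N(dω) + J*(∇_N ω) − S^{[p]}(J*ω)`, where `S(X) = −∇_X N` is the shape
operator, the Gauss formula holds, and `d`, `d^{∂M}` are the exterior derivatives of `M`
and `∂M` (expressed through the respective torsion-free connections). -/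
theorem stmt13 {C : Type*} [CommRing C] {Vec VecB : Type*} [AddCommGroup Vec] [Module C Vec]
    [AddCommGroup VecB] [Module C VecB]
    (act : Vec → C → C) (conn : Vec → Vec → Vec) (connB : VecB → VecB → VecB)
    (ins : VecB →ₗ[C] Vec) (N : Vec) (S : VecB → VecB) (g : VecB → VecB → C)
    (hS : ∀ X : VecB, ins (S X) = -conn (ins X) N)
    (hGauss : ∀ X Y : VecB, conn (ins X) (ins Y) = ins (connB X Y) + g (S X) Y • N)
    {p : ℕ} (ω : Form Vec C (p + 1))
    (hMulti : ∀ (Y : Fin (p + 1) → Vec) (i : Fin (p + 1)) (a b : Vec) (c : C),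
      ω (Function.update Y i (a + c • b))
        = ω (Function.update Y i a) + c * ω (Function.update Y i b))
    (hAlt : ∀ (Y : Fin (p + 1) → Vec) (i j : Fin (p + 1)), i ≠ j → Y i = Y j → ω Y = 0) :
    extD (fun Z c => act (ins Z) c) connB (iNres ins N ω)
      = -iNres ins N (extD act conn ω) + Jstar ins (covD act conn N ω)
          - derext S (Jstar ins ω) := by
  set Ω := Form.toAlternatingMap ω hMulti hAlt
  have curryLeft_update_self : ∀ (Y : Fin p → Vec) (j : Fin p), Ω.curryLeft N (update Y j N) = 0 :=
    fun Y j => Ω.map_eq_zero_of_eq _ (i := 0) (j := j.succ) (by simp)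
      (Fin.succ_ne_zero j).symm
  have conn_normal : ∀ X, conn (ins X) N = -ins (S X) := fun X => by rw [hS, neg_neg]
  calc extD (fun Z c => act (ins Z) c) connB (iNres ins N Ω)
      = Jstar ins (extD act conn (iProdS N Ω)) :=
        (Jstar_extD ins act conn connB N (fun X Y => g (S X) Y) hGauss
          (Ω.curryLeft N).toMultilinearMap curryLeft_update_self).symm
    _ = -iNres ins N (extD act conn Ω) + Jstar ins (covD act conn N Ω)
          + Jstar ins (derext (fun X => conn X N) Ω) := by
        rw [show extD act conn (iProdS N Ω) = -iProdS N (extD act conn Ω) + covD act conn N Ω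
            + derext (fun X => conn X N) Ω by rw [iProdS_extD]; abel]
        rfl
    _ = _ := by
        rw [sub_eq_add_neg, ← Ω.coe_multilinearMap, Jstar_derext ins _ _ S conn_normal]
        rfl
end
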